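/- arXiv:1810.05086 — 2 statements merged into one kernel-verified Lean document; each statement's English description precedes it below -/
import Mathlib

section
/- Let A be a De Morgan poset and let T be the set of nonempty proper down-sets of A. The map i : A → (T → M₂) given by i(a)(D) = κ_D(a) is an order-reflecting morphism of De Morgan posets: i is monotone and order reflecting (i(a) ≤ i(b) pointwise iff a ≤ b), i(0) and i(1) are the constant functions at the bottom and top of M₂, and i(a') = (i(a))' where negation on T → M₂ is pointwise. -/
/-- A down-set of a poset. -/
def IsDownSet {A : Type*} [PartialOrder A] (D : Set A) : Prop :=
  ∀ ⦃x y : A⦄, x ≤ y → y ∈ D → x ∈ D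

/-- A nonempty proper down-set of a poset. -/
def IsProperDownSet {A : Type*} [PartialOrder A] (D : Set A) : Prop :=
  D.Nonempty ∧ D ≠ Set.univ ∧ IsDownSet D

open Classical in
/-- `hD D a = false` iff `a ∈ D`. -/
noncomputable def hD {A : Type*} (D : Set A) (a : A) : Bool :=
  if a ∈ D then false else true

/-- `κ_D(a) = (h_D(a), h_D^∂(a))` where `h_D^∂(a) = ¬ h_D(a')`. -/
noncomputable def kappa {A : Type*} (neg : A → A) (D : Set A) (a : A) :
    Bool × Bool := (hD D a, ! hD D (neg a))

/-- The negation of the four-element De Morgan poset `M₂`: `(a,b)' = (¬b, ¬a)`. -/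
def negM2 (m : Bool × Bool) : Bool × Bool := (! m.2, ! m.1)

/-- The relation `R_G` on down-sets: `D R_G E` iff `κ_D(G x) ≤ κ_E(x)` for all `x ∈ dom G`. -/
def RG {A : Type*} (neg : A → A) (domG : Set A) (G : A → A) (D E : Set A) : Prop :=
  ∀ x ∈ domG, kappa neg D (G x) ≤ kappa neg E x

/-!
Monotonicity of `κ_D` combines that `D` is a down-set with the antitonicity of negation, and
`κ_D` commutes with negation because negation is an involution. For order reflection, if
`a ≰ b` then the principal down-set `↓b` is nonempty and proper, and `h_{↓b}` separates `a`
from `b`. The constants come from `⊥ ∈ D` and `⊤ ∉ D` for every nonempty proper down-set `D`.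
-/

section

variable {A : Type*}

@[simp]
lemma hD_eq_false_iff {D : Set A} {a : A} : hD D a = false ↔ a ∈ D := by
  simp [hD]

@[simp]
lemma hD_eq_true_iff {D : Set A} {a : A} : hD D a = true ↔ a ∉ D := by
  simp [hD]

lemma kappa_neg {neg : A → A} (hinv : Function.Involutive neg) (D : Set A) (a : A) :
    kappa neg D (neg a) = negM2 (kappa neg D a) := by
  simp [kappa, negM2, hinv a]

variable [PartialOrder A]

lemma IsDownSet.monotone_hD {D : Set A} (hdown : IsDownSet D) : Monotone (hD D) := by
  intro a b hab
  cases hb : hD D b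
  · rw [hD_eq_false_iff.mpr (hdown hab (hD_eq_false_iff.mp hb))]
  · exact Bool.le_true _

lemma IsDownSet.monotone_kappa {neg : A → A} (hneg : Antitone neg) {D : Set A}
    (hdown : IsDownSet D) : Monotone (kappa neg D) := fun _ _ hab =>
  Prod.mk_le_mk.mpr ⟨hdown.monotone_hD hab, compl_le_compl (hdown.monotone_hD (hneg hab))⟩

lemma isProperDownSet_Iic {a b : A} (hab : ¬a ≤ b) : IsProperDownSet (Set.Iic b) :=
  ⟨Set.nonempty_Iic, fun h => hab (h.symm ▸ Set.mem_univ a : a ∈ Set.Iic b),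
    fun _ _ hxy hy => hxy.trans hy⟩

lemma le_of_forall_kappa_le (neg : A → A) {a b : A}
    (h : ∀ D : Set A, IsProperDownSet D → kappa neg D a ≤ kappa neg D b) : a ≤ b := by
  by_contra hab
  have hsep : hD (Set.Iic b) a ≤ hD (Set.Iic b) b := (h _ (isProperDownSet_Iic hab)).1
  have ha : hD (Set.Iic b) a = true := hD_eq_true_iff.mpr hab
  have hb : hD (Set.Iic b) b = false := hD_eq_false_iff.mpr le_rfl
  rw [ha, hb] at hsep
  exact absurd hsep (by decide)

variable [BoundedOrder A]

lemma IsProperDownSet.bot_mem {D : Set A} (hprop : IsProperDownSet D) : ⊥ ∈ D :=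
  let ⟨_, hx⟩ := hprop.1
  hprop.2.2 bot_le hx

lemma IsProperDownSet.top_notMem {D : Set A} (hprop : IsProperDownSet D) : ⊤ ∉ D :=
  fun htop => hprop.2.1 (Set.eq_univ_of_forall fun _ => hprop.2.2 le_top htop)

lemma Antitone.map_top_of_involutive {neg : A → A} (hneg : Antitone neg)
    (hinv : Function.Involutive neg) : neg ⊤ = ⊥ :=
  le_bot_iff.mp (hinv ⊥ ▸ hneg le_top)

lemma Antitone.map_bot_of_involutive {neg : A → A} (hneg : Antitone neg)
    (hinv : Function.Involutive neg) : neg ⊥ = ⊤ := by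
  rw [← hneg.map_top_of_involutive hinv, hinv]

lemma IsProperDownSet.kappa_bot {neg : A → A} (hbot : neg ⊥ = ⊤) {D : Set A}
    (hprop : IsProperDownSet D) : kappa neg D ⊥ = (false, false) := by
  simp [kappa, hbot, hprop.bot_mem, hprop.top_notMem]

lemma IsProperDownSet.kappa_top {neg : A → A} (htop : neg ⊤ = ⊥) {D : Set A}
    (hprop : IsProperDownSet D) : kappa neg D ⊤ = (true, true) := by
  simp [kappa, htop, hprop.bot_mem, hprop.top_notMem]

end

/-- The map `i : A → (T → M₂)`, `i(a)(D) = κ_D(a)`, where `T` is the set of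
nonempty proper down-sets of `A`, is an order-reflecting morphism of De Morgan
posets. -/
theorem stmt_8 {A : Type*} [PartialOrder A] [BoundedOrder A]
    (neg : A → A)
    (hanti : ∀ a b : A, a ≤ b → neg b ≤ neg a)
    (hinv : ∀ a : A, neg (neg a) = a) :
    Monotone (fun (a : A) (D : {D : Set A // IsProperDownSet D}) => kappa neg D.1 a) ∧
    (∀ a b : A,
      ((fun D : {D : Set A // IsProperDownSet D} => kappa neg D.1 a) ≤
        fun D : {D : Set A // IsProperDownSet D} => kappa neg D.1 b) ↔ a ≤ b) ∧
    ((fun D : {D : Set A // IsProperDownSet D} => kappa neg D.1 (⊥ : A)) =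
      fun _ => ((false, false) : Bool × Bool)) ∧
    ((fun D : {D : Set A // IsProperDownSet D} => kappa neg D.1 (⊤ : A)) =
      fun _ => ((true, true) : Bool × Bool)) ∧
    (∀ a : A,
      (fun D : {D : Set A // IsProperDownSet D} => kappa neg D.1 (neg a)) =
        fun D : {D : Set A // IsProperDownSet D} => negM2 (kappa neg D.1 a)) := by
  have hneg : Antitone neg := hanti
  have hmono : Monotone fun (a : A) (D : {D : Set A // IsProperDownSet D}) =>
      kappa neg D.1 a :=
    fun _ _ hab D => D.2.2.2.monotone_kappa hneg hab
  refine ⟨hmono, fun a b => ⟨fun h => ?_, fun hab => hmono hab⟩,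
    funext fun D => D.2.kappa_bot (hneg.map_bot_of_involutive hinv),
    funext fun D => D.2.kappa_top (hneg.map_top_of_involutive hinv),
    fun a => funext fun D => kappa_neg hinv D.1 a⟩
  exact le_of_forall_kappa_le neg fun D hD => h ⟨D, hD⟩
end

section
/- Let A be a De Morgan poset and G, H partial semi-tense operators on A such that R_G = (R_H)⁻¹ (i.e., D R_G E iff E R_H D for all nonempty proper down-sets D, E). Then for every b ∈ dom H and every nonempty proper down-set D of A, κ_D(H(b)) = ⨅{ κ_E(b) : E a nonempty proper down-set with E R_G D }, the infimum taken in M₂ (viewed as a complete lattice). -/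
section Kappa

variable {A : Type*} {neg : A → A} {X Y : Set A} {a c : A}

theorem hD_le_hD_iff : hD X a ≤ hD Y c ↔ (c ∈ Y → a ∈ X) := by
  unfold hD; split_ifs <;> simp_all

theorem not_hD_le_not_hD_iff : (!hD X a) ≤ (!hD Y c) ↔ (a ∈ X → c ∈ Y) := by
  unfold hD; split_ifs <;> simp_all

theorem kappa_le_kappa_iff :
    kappa neg X a ≤ kappa neg Y c ↔ (c ∈ Y → a ∈ X) ∧ (neg a ∈ X → neg c ∈ Y) :=
  Prod.le_def.trans (and_congr hD_le_hD_iff not_hD_le_not_hD_iff)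

theorem RG_iff {dom : Set A} {H : A → A} {D E : Set A} :
    RG neg dom H D E ↔ ∀ x ∈ dom, (x ∈ E → H x ∈ D) ∧ (neg (H x) ∈ D → neg x ∈ E) := by
  simp only [RG, kappa_le_kappa_iff]

end Kappa

theorem Prod.sInf_le_of_fst_le_of_snd_le {α β : Type*} [CompleteLattice α] [CompleteLattice β]
    {S : Set (α × β)} {p q m : α × β} (hp : p ∈ S) (hq : q ∈ S) (h₁ : p.1 ≤ m.1)
    (h₂ : q.2 ≤ m.2) : sInf S ≤ m :=
  ⟨(sInf_le hp).1.trans h₁, (sInf_le hq).2.trans h₂⟩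

section ProperDownSet

variable {A : Type*} [PartialOrder A] [BoundedOrder A] {D : Set A}

theorem IsProperDownSet.bot_mem_s12 (hDp : IsProperDownSet D) : ⊥ ∈ D :=
  hDp.1.elim fun _ hd => hDp.2.2 bot_le hd

theorem IsProperDownSet.top_notMem_s12 (hDp : IsProperDownSet D) : ⊤ ∉ D := fun h =>
  hDp.2.1 (Set.eq_univ_of_forall fun _ => hDp.2.2 le_top h)

theorem isProperDownSet_lowerClosure {T : Set A} (hne : T.Nonempty) (htop : ⊤ ∉ T) :
    IsProperDownSet (lowerClosure T : Set A) := by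
  refine ⟨hne.mono subset_lowerClosure, fun h => htop ?_,
    fun _ _ hxy hy => (lowerClosure T).lower hxy hy⟩
  obtain ⟨t, ht, htop_le⟩ := mem_lowerClosure.1 (h ▸ Set.mem_univ (⊤ : A))
  exact top_le_iff.1 htop_le ▸ ht

end ProperDownSet

section Involution

variable {A : Type*} [PartialOrder A] {neg : A → A}

theorem le_of_neg_le_neg_of_involutive (hanti : ∀ a b : A, a ≤ b → neg b ≤ neg a)
    (hinv : ∀ a : A, neg (neg a) = a) {a b : A} (h : neg a ≤ neg b) : b ≤ a :=
  hinv a ▸ hinv b ▸ hanti _ _ h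

theorem neg_top_eq_bot [BoundedOrder A] (hanti : ∀ a b : A, a ≤ b → neg b ≤ neg a)
    (hinv : ∀ a : A, neg (neg a) = a) : neg ⊤ = ⊥ :=
  le_bot_iff.1 (hinv ⊥ ▸ hanti _ _ le_top)

end Involution

section SemiTense

variable {A : Type*} [PartialOrder A] {neg : A → A} {domH : Set A} {H : A → A} {D T : Set A}

theorem RG_lowerClosure (hT₀ : ∀ x ∈ domH, neg (H x) ∈ D → neg x ∈ T)
    (hT₁ : ∀ t ∈ T, ∀ z ∈ domH, z ≤ t → H z ∈ D) :
    RG neg domH H D (lowerClosure T) :=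
  RG_iff.2 fun x hx =>
    ⟨fun ⟨t, ht, hxt⟩ => hT₁ t ht x hx hxt, fun h => subset_lowerClosure (hT₀ x hx h)⟩

theorem isProperDownSet_lowerClosure_of_neg_mem [BoundedOrder A]
    (hanti : ∀ a b : A, a ≤ b → neg b ≤ neg a) (hinv : ∀ a : A, neg (neg a) = a)
    (htopH : (⊤ : A) ∈ domH) (hH1 : H ⊤ = ⊤) (hDp : IsProperDownSet D)
    (hT₀ : ∀ x ∈ domH, neg (H x) ∈ D → neg x ∈ T)
    (hT₁ : ∀ t ∈ T, ∀ z ∈ domH, z ≤ t → H z ∈ D) :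
    IsProperDownSet (lowerClosure T : Set A) := by
  refine isProperDownSet_lowerClosure ⟨_, hT₀ ⊤ htopH ?_⟩ fun htop => ?_
  · rw [hH1, neg_top_eq_bot hanti hinv]
    exact hDp.bot_mem_s12
  · exact hDp.top_notMem_s12 (hH1 ▸ hT₁ ⊤ htop ⊤ htopH le_rfl)

theorem H_mem_of_le_neg (hinv : ∀ a : A, neg (neg a) = a)
    (hP4H : ∀ x y : A, x ≤ y → x ∈ domH → neg y ∈ domH → H x ≤ neg (H (neg y)))
    (hDdown : IsDownSet D) {x z : A} (hx : x ∈ domH) (hxD : neg (H x) ∈ D) (hz : z ∈ domH)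
    (hzx : z ≤ neg x) : H z ∈ D :=
  hDdown (hinv x ▸ hP4H z (neg x) hzx hz ((hinv x).symm ▸ hx)) hxD

theorem negH_mem_of_neg_le_neg (hanti : ∀ a b : A, a ≤ b → neg b ≤ neg a)
    (hinv : ∀ a : A, neg (neg a) = a) (hP2H : ∀ x ∈ domH, ∀ y ∈ domH, x ≤ y → H x ≤ H y)
    (hDdown : IsDownSet D) {x b : A} (hx : x ∈ domH) (hxD : neg (H x) ∈ D) (hb : b ∈ domH)
    (hbx : neg b ≤ neg x) : neg (H b) ∈ D :=
  hDdown (hanti _ _ (hP2H x hx b hb (le_of_neg_le_neg_of_involutive hanti hinv hbx))) hxD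

end SemiTense

theorem stmt_12_general {A : Type*} [PartialOrder A] [BoundedOrder A]
    (neg : A → A)
    (hanti : ∀ a b : A, a ≤ b → neg b ≤ neg a)
    (hinv : ∀ a : A, neg (neg a) = a)
    (domG : Set A) (G : A → A) (domH : Set A) (H : A → A)
    (htopH : (⊤ : A) ∈ domH)
    (hH1 : H ⊤ = ⊤)
    (hP2H : ∀ x ∈ domH, ∀ y ∈ domH, x ≤ y → H x ≤ H y)
    (hP4H : ∀ x y : A, x ≤ y → x ∈ domH → neg y ∈ domH → H x ≤ neg (H (neg y)))
    (hGH : ∀ D E : Set A, IsProperDownSet D → IsProperDownSet E →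
      (RG neg domG G D E ↔ RG neg domH H E D)) :
    ∀ b ∈ domH, ∀ D : Set A, IsProperDownSet D →
      kappa neg D (H b) =
        sInf {m : Bool × Bool |
          ∃ E : Set A, IsProperDownSet E ∧ RG neg domG G E D ∧ m = kappa neg E b} := by
  intro b hb D hDp
  set S := {m : Bool × Bool |
    ∃ E : Set A, IsProperDownSet E ∧ RG neg domG G E D ∧ m = kappa neg E b}
  have mem_S : ∀ T : Set A, (∀ x ∈ domH, neg (H x) ∈ D → neg x ∈ T) →
      (∀ t ∈ T, ∀ z ∈ domH, z ≤ t → H z ∈ D) → kappa neg (lowerClosure T) b ∈ S :=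
    fun T hT₀ hT₁ =>
      have hE := isProperDownSet_lowerClosure_of_neg_mem hanti hinv htopH hH1 hDp hT₀ hT₁
      ⟨_, hE, (hGH _ _ hE hDp).2 (RG_lowerClosure hT₀ hT₁), rfl⟩
  -- `lowerClosure T₀` is the least `E` with `D R_H E`
  set T₀ := neg '' {x | x ∈ domH ∧ neg (H x) ∈ D}
  have hT₀ : ∀ x ∈ domH, neg (H x) ∈ D → neg x ∈ T₀ := fun x hx hxD => ⟨x, ⟨hx, hxD⟩, rfl⟩
  have hT₀H : ∀ t ∈ T₀, ∀ z ∈ domH, z ≤ t → H z ∈ D := by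
    rintro _ ⟨x, ⟨hx, hxD⟩, rfl⟩ z hz hzx
    exact H_mem_of_le_neg hinv hP4H hDp.2.2 hx hxD hz hzx
  have hT₁H : ∀ t ∈ T₀ ∪ {x | x ∈ domH ∧ H x ∈ D}, ∀ z ∈ domH, z ≤ t → H z ∈ D := by
    rintro t (ht | ⟨ht, htD⟩) z hz hzt
    exacts [hT₀H t ht z hz hzt, hDp.2.2 (hP2H z hz t ht hzt) htD]
  refine le_antisymm (le_sInf ?_) (Prod.sInf_le_of_fst_le_of_snd_le
    (mem_S _ (fun x hx hxD => Or.inl (hT₀ x hx hxD)) hT₁H) (mem_S T₀ hT₀ hT₀H) ?_ ?_)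
  · rintro _ ⟨E, hE, hRG, rfl⟩
    exact (hGH E D hE hDp).1 hRG b hb
  · exact hD_le_hD_iff.2 fun hbD => subset_lowerClosure (Or.inr ⟨hb, hbD⟩)
  · refine not_hD_le_not_hD_iff.2 ?_
    rintro ⟨_, ⟨x, ⟨hx, hxD⟩, rfl⟩, hbx⟩
    exact negH_mem_of_neg_le_neg hanti hinv hP2H hDp.2.2 hx hxD hb hbx

/-- If `G` and `H` are partial semi-tense operators with `R_G = (R_H)⁻¹`, then
for `b ∈ dom H` and a nonempty proper down-set `D`,
`κ_D(H(b)) = ⨅ {κ_E(b) : E R_G D}` in `M₂`. -/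
theorem stmt_12 {A : Type*} [PartialOrder A] [BoundedOrder A]
    (neg : A → A)
    (hanti : ∀ a b : A, a ≤ b → neg b ≤ neg a)
    (hinv : ∀ a : A, neg (neg a) = a)
    (domG : Set A) (G : A → A) (domH : Set A) (H : A → A)
    (hbotG : (⊥ : A) ∈ domG) (htopG : (⊤ : A) ∈ domG)
    (hG0 : G ⊥ = ⊥) (hG1 : G ⊤ = ⊤)
    (hP2G : ∀ x ∈ domG, ∀ y ∈ domG, x ≤ y → G x ≤ G y)
    (hP4G : ∀ x y : A, x ≤ y → x ∈ domG → neg y ∈ domG → G x ≤ neg (G (neg y)))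
    (hbotH : (⊥ : A) ∈ domH) (htopH : (⊤ : A) ∈ domH)
    (hH0 : H ⊥ = ⊥) (hH1 : H ⊤ = ⊤)
    (hP2H : ∀ x ∈ domH, ∀ y ∈ domH, x ≤ y → H x ≤ H y)
    (hP4H : ∀ x y : A, x ≤ y → x ∈ domH → neg y ∈ domH → H x ≤ neg (H (neg y)))
    (hGH : ∀ D E : Set A, IsProperDownSet D → IsProperDownSet E →
      (RG neg domG G D E ↔ RG neg domH H E D)) :
    ∀ b ∈ domH, ∀ D : Set A, IsProperDownSet D →
      kappa neg D (H b) =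
        sInf {m : Bool × Bool |
          ∃ E : Set A, IsProperDownSet E ∧ RG neg domG G E D ∧ m = kappa neg E b} :=
  stmt_12_general neg hanti hinv domG G domH H htopH hH1 hP2H hP4H hGH
end
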